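/- If a pair of finite groups (L1, L2) has a Sims pair, then L1 and L2 have compatible subnormal series. In particular, if L1 and L2 are compatible, then they have compatible subnormal series. -/
import Mathlib


/-- Two finite groups `L1` and `L2` are compatible if some finite group `G` has
isomorphic normal subgroups `N1 ≅ N2` with `G ⧸ N1 ≅ L1` and `G ⧸ N2 ≅ L2`. -/
def Compatible (L1 : Type) [Group L1] (L2 : Type) [Group L2] : Prop :=
  ∃ (G : Type) (_ : Group G) (_ : Finite G) (N1 N2 : Subgroup G)
    (h1 : N1.Normal) (h2 : N2.Normal),
    Nonempty (↥N1 ≃* ↥N2) ∧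
      (letI := h1; letI := h2;
        Nonempty ((G ⧸ N1) ≃* L1) ∧ Nonempty ((G ⧸ N2) ≃* L2))

/-- `(M1, M2)` is a Sims pair for `(L1, L2)`: `M1 ⊴ L1` and `M2 ⊴ L2` are compatible
and `L1 ⧸ M1 ≅ L2 ⧸ M2` is nontrivial. -/
def IsSimsPair (L1 : Type) [Group L1] (L2 : Type) [Group L2]
    (M1 : Subgroup L1) (M2 : Subgroup L2) : Prop :=
  ∃ (h1 : M1.Normal) (h2 : M2.Normal),
    Compatible ↥M1 ↥M2 ∧
      (letI := h1; letI := h2;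
        Nonempty ((L1 ⧸ M1) ≃* (L2 ⧸ M2)) ∧ Nontrivial (L1 ⧸ M1))

/-- `L1` and `L2` have compatible subnormal series: subnormal series of the same
length whose successive factors are isomorphic in the same order. -/
def HaveCompatibleSubnormalSeries (L1 : Type) [Group L1] (L2 : Type) [Group L2] : Prop :=
  ∃ (n : ℕ) (c1 : Fin (n + 1) → Subgroup L1) (c2 : Fin (n + 1) → Subgroup L2),
    c1 0 = ⊥ ∧ c1 (Fin.last n) = ⊤ ∧ c2 0 = ⊥ ∧ c2 (Fin.last n) = ⊤ ∧
    (∀ i : Fin n, c1 i.castSucc ≤ c1 i.succ) ∧ (∀ i : Fin n, c2 i.castSucc ≤ c2 i.succ) ∧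
    ∀ i : Fin n,
      ∃ (h1 : ((c1 i.castSucc).subgroupOf (c1 i.succ)).Normal)
        (h2 : ((c2 i.castSucc).subgroupOf (c2 i.succ)).Normal),
        letI := h1; letI := h2
        Nonempty ((↥(c1 i.succ) ⧸ (c1 i.castSucc).subgroupOf (c1 i.succ)) ≃*
          (↥(c2 i.succ) ⧸ (c2 i.castSucc).subgroupOf (c2 i.succ)))

/-- `L1` and `L2` have compatible normal series: series with every term normal in
the whole group, of the same length, whose successive factors are isomorphic in the
same order. -/
def HaveCompatibleNormalSeries (L1 : Type) [Group L1] (L2 : Type) [Group L2] : Prop :=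
  ∃ (n : ℕ) (c1 : Fin (n + 1) → Subgroup L1) (c2 : Fin (n + 1) → Subgroup L2),
    c1 0 = ⊥ ∧ c1 (Fin.last n) = ⊤ ∧ c2 0 = ⊥ ∧ c2 (Fin.last n) = ⊤ ∧
    (∀ i : Fin (n + 1), (c1 i).Normal) ∧ (∀ i : Fin (n + 1), (c2 i).Normal) ∧
    (∀ i : Fin n, c1 i.castSucc ≤ c1 i.succ) ∧ (∀ i : Fin n, c2 i.castSucc ≤ c2 i.succ) ∧
    ∀ i : Fin n,
      ∃ (h1 : ((c1 i.castSucc).subgroupOf (c1 i.succ)).Normal)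
        (h2 : ((c2 i.castSucc).subgroupOf (c2 i.succ)).Normal),
        letI := h1; letI := h2
        Nonempty ((↥(c1 i.succ) ⧸ (c1 i.castSucc).subgroupOf (c1 i.succ)) ≃*
          (↥(c2 i.succ) ⧸ (c2 i.castSucc).subgroupOf (c2 i.succ)))

namespace SimsAux

open Subgroup QuotientGroup

/-- Symmetry equivalence `A.subgroupOf B ≃* B.subgroupOf A`. -/
def subgroupOfComm {G : Type*} [Group G] (A B : Subgroup G) :
    ↥(A.subgroupOf B) ≃* ↥(B.subgroupOf A) where
  toFun x := ⟨⟨(x : ↥B), x.2⟩, (x : ↥B).2⟩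
  invFun x := ⟨⟨(x : ↥A), x.2⟩, (x : ↥A).2⟩
  left_inv _ := rfl
  right_inv _ := rfl
  map_mul' _ _ := rfl

/-- quotient of the top subgroup. -/
noncomputable def topQuotEquiv {L : Type*} [Group L] (N : Subgroup L) [N.Normal] :
    (↥(⊤ : Subgroup L) ⧸ N.subgroupOf ⊤) ≃* L ⧸ N :=
  QuotientGroup.congr _ _ Subgroup.topEquiv
    (by
      rw [show ((Subgroup.topEquiv : ↥(⊤ : Subgroup L) ≃* L) : ↥(⊤ : Subgroup L) →* L)
            = (⊤ : Subgroup L).subtype from rfl,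
        Subgroup.subgroupOf_map_subtype, inf_top_eq])

lemma map_equivMap_subgroupOf {A B : Type*} [Group A] [Group B] (f : A →* B)
    (hf : Function.Injective f) (K K' : Subgroup A) :
    Subgroup.map (K'.equivMapOfInjective f hf : ↥K' →* ↥(K'.map f)) (K.subgroupOf K')
      = (K.map f).subgroupOf (K'.map f) := by
  ext x
  simp only [Subgroup.mem_map, Subgroup.mem_subgroupOf]
  constructor
  · rintro ⟨y, hy, rfl⟩
    exact ⟨(y : A), hy, by
      simp [MonoidHom.coe_coe, Subgroup.coe_equivMapOfInjective_apply]⟩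
  · intro hx
    obtain ⟨a, ha, hax⟩ := hx
    obtain ⟨b, hb, hbx⟩ := x.2
    have hab : a = b := hf (by rw [hax, hbx])
    refine ⟨⟨b, hb⟩, by simpa [← hab] using ha, ?_⟩
    apply Subtype.ext
    simp [MonoidHom.coe_coe, Subgroup.coe_equivMapOfInjective_apply, hbx]

lemma factor_equiv {A B : Type*} [Group A] [Group B] (f : A →* B) (hf : Function.Injective f)
    (K K' : Subgroup A) (h : (K.subgroupOf K').Normal) :
    ∃ h' : ((K.map f).subgroupOf (K'.map f)).Normal,
      letI := h; letI := h'
      Nonempty ((↥(K'.map f) ⧸ (K.map f).subgroupOf (K'.map f)) ≃* (↥K' ⧸ K.subgroupOf K')) := by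
  haveI := h
  have heq := map_equivMap_subgroupOf f hf K K'
  haveI h' : ((K.map f).subgroupOf (K'.map f)).Normal := by
    rw [← heq]
    exact h.map _ (MulEquiv.surjective _)
  exact ⟨h', ⟨(QuotientGroup.congr _ _ (K'.equivMapOfInjective f hf) heq).symm⟩⟩

lemma extend {L1 L2 : Type} [Group L1] [Group L2] (M1 : Subgroup L1) (M2 : Subgroup L2)
    (hM1 : M1.Normal) (hM2 : M2.Normal)
    (hs : HaveCompatibleSubnormalSeries ↥M1 ↥M2)
    (e : letI := hM1; letI := hM2; (L1 ⧸ M1) ≃* (L2 ⧸ M2)) :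
    HaveCompatibleSubnormalSeries L1 L2 := by
  haveI := hM1; haveI := hM2
  obtain ⟨n, c1, c2, h10, h1t, h20, h2t, hm1, hm2, hfac⟩ := hs
  refine ⟨n + 1, Fin.snoc (fun i => (c1 i).map M1.subtype) ⊤,
    Fin.snoc (fun i => (c2 i).map M2.subtype) ⊤, ?_, ?_, ?_, ?_, ?_, ?_, ?_⟩
  · rw [show (0 : Fin (n + 2)) = Fin.castSucc 0 from rfl, Fin.snoc_castSucc, h10,
      Subgroup.map_bot]
  · rw [Fin.snoc_last]
  · rw [show (0 : Fin (n + 2)) = Fin.castSucc 0 from rfl, Fin.snoc_castSucc, h20,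
      Subgroup.map_bot]
  · rw [Fin.snoc_last]
  · intro i
    refine Fin.lastCases ?_ (fun j => ?_) i
    · rw [Fin.succ_last, Fin.snoc_last]; exact le_top
    · rw [Fin.succ_castSucc, Fin.snoc_castSucc, Fin.snoc_castSucc]
      exact Subgroup.map_mono (hm1 j)
  · intro i
    refine Fin.lastCases ?_ (fun j => ?_) i
    · rw [Fin.succ_last, Fin.snoc_last]; exact le_top
    · rw [Fin.succ_castSucc, Fin.snoc_castSucc, Fin.snoc_castSucc]
      exact Subgroup.map_mono (hm2 j)
  · intro i
    refine Fin.lastCases ?_ (fun j => ?_) i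
    · rw [Fin.succ_last, Fin.snoc_last, Fin.snoc_last, Fin.snoc_castSucc, Fin.snoc_castSucc,
        h1t, h2t, ← MonoidHom.range_eq_map, ← MonoidHom.range_eq_map, Subgroup.range_subtype,
        Subgroup.range_subtype]
      exact ⟨inferInstance, inferInstance,
        ⟨(topQuotEquiv M1).trans (e.trans (topQuotEquiv M2).symm)⟩⟩
    · rw [Fin.succ_castSucc, Fin.snoc_castSucc, Fin.snoc_castSucc, Fin.snoc_castSucc,
        Fin.snoc_castSucc]
      obtain ⟨hn1, hn2, ⟨eiso⟩⟩ := hfac j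
      obtain ⟨hn1', ⟨q1⟩⟩ := factor_equiv M1.subtype M1.subtype_injective _ _ hn1
      obtain ⟨hn2', ⟨q2⟩⟩ := factor_equiv M2.subtype M2.subtype_injective _ _ hn2
      exact ⟨hn1', hn2', ⟨q1.trans (eiso.trans q2.symm)⟩⟩

lemma triv_series {L1 L2 : Type} [Group L1] [Group L2] [Subsingleton L1] [Subsingleton L2] :
    HaveCompatibleSubnormalSeries L1 L2 := by
  have hb1 : (⊥ : Subgroup L1) = ⊤ :=
    (Subgroup.eq_top_iff' _).2 fun x => by simp [Subgroup.mem_bot, Subsingleton.elim x 1]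
  have hb2 : (⊥ : Subgroup L2) = ⊤ :=
    (Subgroup.eq_top_iff' _).2 fun x => by simp [Subgroup.mem_bot, Subsingleton.elim x 1]
  exact ⟨0, fun _ => ⊥, fun _ => ⊥, rfl, hb1, rfl, hb2, fun i => i.elim0, fun i => i.elim0,
    fun i => i.elim0⟩

lemma series_of_iso {L1 L2 : Type} [Group L1] [Group L2] (e : L1 ≃* L2) :
    HaveCompatibleSubnormalSeries L1 L2 := by
  haveI : Subsingleton ↥(⊥ : Subgroup L1) := ⟨fun a b => Subtype.ext (by
    have ha := a.2; have hb := b.2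
    rw [Subgroup.mem_bot] at ha hb; rw [ha, hb])⟩
  haveI : Subsingleton ↥(⊥ : Subgroup L2) := ⟨fun a b => Subtype.ext (by
    have ha := a.2; have hb := b.2
    rw [Subgroup.mem_bot] at ha hb; rw [ha, hb])⟩
  exact extend ⊥ ⊥ inferInstance inferInstance triv_series
    ((QuotientGroup.quotientBot (G := L1)).trans
      (e.trans (QuotientGroup.quotientBot (G := L2)).symm))

lemma aux : ∀ k : ℕ, ∀ (L1 : Type) (_ : Group L1) (L2 : Type) (_ : Group L2)
    (G : Type) (_ : Group G) (_ : Finite G) (N1 N2 : Subgroup G)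
    (h1 : N1.Normal) (h2 : N2.Normal), Nat.card G ≤ k →
    (↥N1 ≃* ↥N2) → ((letI := h1; G ⧸ N1) ≃* L1) → ((letI := h2; G ⧸ N2) ≃* L2) →
    HaveCompatibleSubnormalSeries L1 L2 := by
  intro k
  induction k with
  | zero =>
    intro _ _ _ _ G _ _ _ _ _ _ hk _ _ _
    exact absurd hk (by have := Nat.card_pos (α := G); omega)
  | succ k ih =>
    intro L1 _ L2 _ G _ _ N1 N2 h1 h2 hk φ e1 e2
    haveI := h1; haveI := h2
    by_cases htop : N1 = ⊤
    · haveI : Subsingleton (G ⧸ N1) := htop ▸ QuotientGroup.subsingleton_quotient_top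
      have hN2 : N2 = ⊤ := by
        refine Subgroup.eq_top_of_card_eq _ ?_
        have hcard : Nat.card ↥N2 = Nat.card ↥N1 := Nat.card_congr φ.symm.toEquiv
        rw [hcard, htop, Subgroup.card_top]
      haveI : Subsingleton (G ⧸ N2) := hN2 ▸ QuotientGroup.subsingleton_quotient_top
      haveI : Subsingleton L1 := e1.toEquiv.symm.subsingleton
      haveI : Subsingleton L2 := e2.toEquiv.symm.subsingleton
      exact triv_series
    · -- cardinality decrease
      have hlt : Nat.card ↥N1 < Nat.card G := by
        have hmul := Subgroup.card_mul_index N1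
        have hidx1 : N1.index ≠ 1 := fun h => htop (Subgroup.index_eq_one.mp h)
        have hidx0 : N1.index ≠ 0 := Subgroup.index_ne_zero_of_finite
        have hpos : 0 < Nat.card ↥N1 := Nat.card_pos
        nlinarith [Nat.one_lt_iff_ne_zero_and_ne_one.mpr ⟨hidx0, hidx1⟩]
      -- data
      set M1 : Subgroup L1 := (N2.map (QuotientGroup.mk' N1)).map (e1 : (G ⧸ N1) →* L1) with hM1def
      set M2 : Subgroup L2 := (N1.map (QuotientGroup.mk' N2)).map (e2 : (G ⧸ N2) →* L2) with hM2def
      haveI hq1 : (N2.map (QuotientGroup.mk' N1)).Normal :=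
        h2.map _ (QuotientGroup.mk'_surjective N1)
      haveI hq2 : (N1.map (QuotientGroup.mk' N2)).Normal :=
        h1.map _ (QuotientGroup.mk'_surjective N2)
      haveI hM1 : M1.Normal := hq1.map _ e1.surjective
      haveI hM2 : M2.Normal := hq2.map _ e2.surjective
      set K2 : Subgroup ↥N1 := N2.subgroupOf N1 with hK2def
      haveI hS2 : (N1.subgroupOf N2).Normal := h1.subgroupOf N2
      set K1 : Subgroup ↥N1 := (N1.subgroupOf N2).comap (φ : ↥N1 →* ↥N2) with hK1def
      haveI hK1 : K1.Normal := hS2.comap _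
      haveI hK2 : K2.Normal := h2.subgroupOf N1
      have hmapK1 : K1.map (φ : ↥N1 →* ↥N2) = N1.subgroupOf N2 :=
        Subgroup.map_comap_eq_self_of_surjective φ.surjective _
      -- K1 ≃* K2
      have φ' : ↥K1 ≃* ↥K2 :=
        (φ.subgroupMap K1).trans ((MulEquiv.subgroupCongr hmapK1).trans (subgroupOfComm N1 N2))
      -- e1' : ↥N1 ⧸ K1 ≃* ↥M1
      have e1' : (↥N1 ⧸ K1) ≃* ↥M1 := by
        set f1 : ↥N2 →* G ⧸ N1 := (QuotientGroup.mk' N1).comp N2.subtype with hf1def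
        have hker1 : N1.subgroupOf N2 = f1.ker := by
          rw [hf1def, ← MonoidHom.comap_ker, QuotientGroup.ker_mk']; rfl
        have hrange1 : f1.range = N2.map (QuotientGroup.mk' N1) := by
          rw [hf1def, MonoidHom.range_comp, Subgroup.range_subtype]
        exact (QuotientGroup.congr K1 (N1.subgroupOf N2) φ hmapK1).trans
          ((QuotientGroup.quotientMulEquivOfEq hker1).trans
            ((QuotientGroup.quotientKerEquivRange f1).trans
              ((MulEquiv.subgroupCongr hrange1).trans
                ((N2.map (QuotientGroup.mk' N1)).equivMapOfInjective _ e1.injective))))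
      have e2' : (↥N1 ⧸ K2) ≃* ↥M2 := by
        set f2 : ↥N1 →* G ⧸ N2 := (QuotientGroup.mk' N2).comp N1.subtype with hf2def
        have hker2 : K2 = f2.ker := by
          rw [hf2def, ← MonoidHom.comap_ker, QuotientGroup.ker_mk']; rfl
        have hrange2 : f2.range = N1.map (QuotientGroup.mk' N2) := by
          rw [hf2def, MonoidHom.range_comp, Subgroup.range_subtype]
        exact (QuotientGroup.quotientMulEquivOfEq hker2).trans
          ((QuotientGroup.quotientKerEquivRange f2).trans
            ((MulEquiv.subgroupCongr hrange2).trans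
              ((N1.map (QuotientGroup.mk' N2)).equivMapOfInjective _ e2.injective)))
      -- quotient equivalence
      have hbot1 : N1.map (QuotientGroup.mk' N1) = ⊥ :=
        (Subgroup.map_eq_bot_iff _).mpr (QuotientGroup.ker_mk' N1).ge
      have hbot2 : N2.map (QuotientGroup.mk' N2) = ⊥ :=
        (Subgroup.map_eq_bot_iff _).mpr (QuotientGroup.ker_mk' N2).ge
      have hsup1 : (N1 ⊔ N2).map (QuotientGroup.mk' N1) = N2.map (QuotientGroup.mk' N1) := by
        rw [Subgroup.map_sup, hbot1, bot_sup_eq]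
      have hsup2 : (N1 ⊔ N2).map (QuotientGroup.mk' N2) = N1.map (QuotientGroup.mk' N2) := by
        rw [Subgroup.map_sup, hbot2, sup_bot_eq]
      have qe : (L1 ⧸ M1) ≃* (L2 ⧸ M2) :=
        ((QuotientGroup.congr (N2.map (QuotientGroup.mk' N1)) M1 e1 rfl).symm.trans
          ((QuotientGroup.quotientMulEquivOfEq hsup1.symm).trans
            ((QuotientGroup.quotientQuotientEquivQuotient N1 (N1 ⊔ N2) le_sup_left).trans
              (((QuotientGroup.quotientQuotientEquivQuotient N2 (N1 ⊔ N2) le_sup_right).symm.trans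
                (QuotientGroup.quotientMulEquivOfEq hsup2)).trans
                (QuotientGroup.congr (N1.map (QuotientGroup.mk' N2)) M2 e2 rfl)))))
      exact extend M1 M2 hM1 hM2
        (ih ↥M1 inferInstance ↥M2 inferInstance ↥N1 inferInstance inferInstance K1 K2 hK1 hK2
          (by omega) φ' e1' e2') qe


lemma of_compatible {L1 L2 : Type} [Group L1] [Group L2] (h : Compatible L1 L2) :
    HaveCompatibleSubnormalSeries L1 L2 := by
  obtain ⟨G, gG, gF, N1, N2, h1, h2, ⟨φ⟩, ⟨e1⟩, ⟨e2⟩⟩ := h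
  exact aux (Nat.card G) L1 inferInstance L2 inferInstance G gG gF N1 N2 h1 h2 le_rfl φ e1 e2

end SimsAux

/-- Corollary 4.3: if `(L1, L2)` has a Sims pair, then `L1` and `L2` have compatible
subnormal series; in particular compatible groups have compatible subnormal series. -/
theorem compatible_subnormal_series_of_sims_pair
    (L1 : Type) [Group L1] [Finite L1] (L2 : Type) [Group L2] [Finite L2] :
    ((∃ (M1 : Subgroup L1) (M2 : Subgroup L2), IsSimsPair L1 L2 M1 M2) →
      HaveCompatibleSubnormalSeries L1 L2) ∧
    (Compatible L1 L2 → HaveCompatibleSubnormalSeries L1 L2) := by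
  constructor
  · rintro ⟨M1, M2, h1, h2, hcomp, ⟨e⟩, _⟩
    exact SimsAux.extend M1 M2 h1 h2 (SimsAux.of_compatible hcomp) e
  · exact SimsAux.of_compatible
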